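/- Let p be a prime, r ≥ 1, and let X, Y, S, U, V be random variables on a finite probability space, with X, Y, S taking values in finite sets and U, V taking values in Z_{p^r}; let Z = U + V with addition in Z_{p^r}. Suppose the joint distribution factors as P(x,y,u,v) = P_{XY}(x,y)·P_{U|X}(u|x)·P_{V|Y}(v|y) (i.e., U−X−Y−V is a Markov chain), and suppose S is conditionally independent of (U,V) given (X,Y). Then H(U|X) ≤ H(Z|S) and H(V|Y) ≤ H(Z|S). -/

import Mathlib

open scoped Classical

noncomputable section

/-- Base-2 Shannon entropy of a probability mass function on a finite type
(with the convention `0 · log 0 = 0`, automatic since `Real.logb 2 0 = 0`). -/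
def ent {A : Type*} [Fintype A] (P : A → ℝ) : ℝ :=
  -∑ a, P a * Real.logb 2 (P a)

/-- Distribution (pushforward pmf) of a random variable `X` on a finite
probability space with weights `μ`. -/
def distOf {Ω A : Type*} [Fintype Ω] (μ : Ω → ℝ) (X : Ω → A) : A → ℝ :=
  fun a => ∑ ω, if X ω = a then μ ω else 0

/-- Entropy `H(X)` of a random variable `X` on a finite probability space. -/
def Hent {Ω A : Type*} [Fintype Ω] [Fintype A] (μ : Ω → ℝ) (X : Ω → A) : ℝ :=
  ent (distOf μ X)

/-- Conditional entropy `H(X | Y) = H(X,Y) − H(Y)`. -/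
def condEnt {Ω A B : Type*} [Fintype Ω] [Fintype A] [Fintype B]
    (μ : Ω → ℝ) (X : Ω → A) (Y : Ω → B) : ℝ :=
  Hent μ (fun ω => (X ω, Y ω)) - Hent μ Y

/-- The additive subgroup `p^i · Z_{p^r} = {p^i * x : x ∈ Z_{p^r}}` of `Z_{p^r}`. -/
def pZ (p r i : ℕ) : AddSubgroup (ZMod (p ^ r)) where
  carrier := Set.range (fun x : ZMod (p ^ r) => (p : ZMod (p ^ r)) ^ i * x)
  add_mem' := by rintro a b ⟨x, rfl⟩ ⟨y, rfl⟩; exact ⟨x + y, by ring⟩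
  zero_mem' := ⟨0, by ring⟩
  neg_mem' := by rintro a ⟨x, rfl⟩; exact ⟨-x, by ring⟩

instance {G : Type*} [AddGroup G] [Finite G] (H : AddSubgroup G) : Fintype (G ⧸ H) :=
  Fintype.ofFinite _

instance {G : Type*} [AddGroup G] [Finite G] (H : AddSubgroup G) : Fintype H :=
  Fintype.ofFinite _

/-- A sequence `x ∈ A^n` is strongly `ε`-typical for the pmf `Q` if each empirical
frequency is within `ε` of `Q a`, and symbols of zero probability never occur. -/
def StronglyTypical {A : Type*} [Fintype A] {n : ℕ} (Q : A → ℝ)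
    (x : Fin n → A) (ε : ℝ) : Prop :=
  ∀ a : A,
    |((Finset.univ.filter (fun j => x j = a)).card : ℝ) / n - Q a| ≤ ε ∧
    (Q a = 0 → (Finset.univ.filter (fun j => x j = a)).card = 0)


/-!
If `U` is independent of `(S, V)` given `X`, then
`H(U | X) = H(U | S, V, X) ≤ H(U | S, V) = H(U + V | S, V) ≤ H(U + V | S)`.
Concretely this is one Gibbs inequality: with `Q₁ = P_{U|X}`,
`E[log (P(U + V, S) / (P(S) Q₁(X, U)))] ≤ 0`, because for fixed `(S, V, X) = (s, v, x)` the
sum over `u` of `Q₁(x, u) · P(u + v, s) / (P(s) Q₁(x, u))` is at most the sum of `P(z, s) / P(s)`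
over a translate of the group, which is at most `1`. The Markov factorisation and the
conditional independence of `S` give that independence for `U`, and symmetrically for `V`.
-/

section FiniteProbability

variable {Ω α β γ : Type*} [Fintype Ω] (μ : Ω → ℝ)

lemma distOf_nonneg (hμ0 : ∀ ω, 0 ≤ μ ω) (W : Ω → α) (a : α) : 0 ≤ distOf μ W a :=
  Finset.sum_nonneg fun ω _ => by split <;> simp [hμ0 ω]

lemma distOf_le_distOf (hμ0 : ∀ ω, 0 ≤ μ ω) {W : Ω → α} {W' : Ω → β} {a : α} {b : β}
    (h : ∀ ω, W ω = a → W' ω = b) : distOf μ W a ≤ distOf μ W' b := by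
  refine Finset.sum_le_sum fun ω _ => ?_
  by_cases hω : W ω = a
  · simp [hω, h ω hω]
  · simp only [hω, if_false]
    split <;> simp [hμ0 ω]

lemma distOf_congr {W : Ω → α} {W' : Ω → β} {a : α} {b : β}
    (h : ∀ ω, W ω = a ↔ W' ω = b) : distOf μ W a = distOf μ W' b :=
  Finset.sum_congr rfl fun ω _ => by simp only [h ω]

lemma distOf_pos (hμ0 : ∀ ω, 0 ≤ μ ω) (W : Ω → α) {ω : Ω} (hω : 0 < μ ω) :
    0 < distOf μ W (W ω) :=
  hω.trans_le <| by
    simpa [distOf] using Finset.single_le_sum (f := fun ω' => if W ω' = W ω then μ ω' else 0)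
      (fun ω' _ => by split <;> simp [hμ0 ω']) (Finset.mem_univ ω)

lemma sum_mul_comp_eq_sum_distOf [Fintype α] (W : Ω → α) (g : α → ℝ) :
    ∑ ω, μ ω * g (W ω) = ∑ a, distOf μ W a * g a := by
  simp only [distOf, Finset.sum_mul, ite_mul, zero_mul]
  rw [Finset.sum_comm]
  simp

lemma sum_distOf (hμ1 : ∑ ω, μ ω = 1) [Fintype α] (W : Ω → α) : ∑ a, distOf μ W a = 1 := by
  simpa [hμ1] using (sum_mul_comp_eq_sum_distOf μ W fun _ => 1).symm

lemma sum_distOf_pair_right [Fintype β] (W : Ω → α) (T : Ω → β) (a : α) :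
    ∑ b, distOf μ (fun ω => (W ω, T ω)) (a, b) = distOf μ W a := by
  simp only [distOf]
  rw [Finset.sum_comm]
  simp [ite_and]

lemma sum_distOf_pair_left [Fintype β] (T : Ω → β) (W : Ω → α) (a : α) :
    ∑ b, distOf μ (fun ω => (T ω, W ω)) (b, a) = distOf μ W a := by
  simp only [distOf]
  rw [Finset.sum_comm]
  simp [ite_and]

lemma sum_distOf_triple [Fintype β] (C : Ω → γ) (A : Ω → α) (T : Ω → β) (c : γ) (a : α) :
    ∑ t, distOf μ (fun ω => (C ω, A ω, T ω)) (c, a, t) = distOf μ (fun ω => (C ω, A ω)) (c, a) := by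
  simp only [distOf]
  rw [Finset.sum_comm]
  simp [ite_and]

lemma Hent_eq_neg_sum [Fintype α] (W : Ω → α) :
    Hent μ W = -∑ ω, μ ω * Real.logb 2 (distOf μ W (W ω)) := by
  rw [Hent, ent, sum_mul_comp_eq_sum_distOf μ W fun a => Real.logb 2 (distOf μ W a)]

lemma condEnt_eq_neg_sum (hμ0 : ∀ ω, 0 ≤ μ ω) [Fintype α] [Fintype β] (X : Ω → α) (Y : Ω → β) :
    condEnt μ X Y = -∑ ω, μ ω *
      Real.logb 2 (distOf μ (fun ω => (X ω, Y ω)) (X ω, Y ω) / distOf μ Y (Y ω)) := by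
  rw [condEnt, Hent_eq_neg_sum, Hent_eq_neg_sum, neg_sub_neg, ← Finset.sum_sub_distrib,
    ← Finset.sum_neg_distrib]
  refine Finset.sum_congr rfl fun ω _ => ?_
  rcases (hμ0 ω).eq_or_lt with hω | hω
  · simp [← hω]
  · rw [Real.logb_div (distOf_pos μ hμ0 _ hω).ne' (distOf_pos μ hμ0 Y hω).ne']
    ring

lemma sum_mul_logb_nonpos (hμ0 : ∀ ω, 0 ≤ μ ω) (hμ1 : ∑ ω, μ ω = 1) {F : Ω → ℝ}
    (hF : ∀ ω, 0 < μ ω → 0 < F ω) (h : ∑ ω, μ ω * F ω ≤ 1) :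
    ∑ ω, μ ω * Real.logb 2 (F ω) ≤ 0 := by
  have hlog2 : 0 < Real.log 2 := Real.log_pos one_lt_two
  calc ∑ ω, μ ω * Real.logb 2 (F ω)
      ≤ ∑ ω, (μ ω * F ω - μ ω) / Real.log 2 := by
        refine Finset.sum_le_sum fun ω _ => ?_
        rcases (hμ0 ω).eq_or_lt with hω | hω
        · simp [← hω]
        · rw [← mul_sub_one, mul_div_assoc, Real.logb]
          gcongr
          exact Real.log_le_sub_one_of_pos (hF ω hω)
    _ = (∑ ω, μ ω * F ω - 1) / Real.log 2 := by
        rw [← Finset.sum_div, Finset.sum_sub_distrib, hμ1]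
    _ ≤ 0 := div_nonpos_of_nonpos_of_nonneg (by linarith) hlog2.le

end FiniteProbability

/-- `K a` is the conditional law of `T` given `(C, A) = (c, a)`, whatever `c` is. -/
def HasCondKernel {Ω γ α β : Type*} [Fintype Ω] (μ : Ω → ℝ) (C : Ω → γ) (A : Ω → α)
    (T : Ω → β) (K : α → β → ℝ) : Prop :=
  ∀ c a t, distOf μ (fun ω => (C ω, A ω, T ω)) (c, a, t)
    = distOf μ (fun ω => (C ω, A ω)) (c, a) * K a t

namespace HasCondKernel

variable {Ω α β γ : Type*} [Fintype Ω] {μ : Ω → ℝ}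

lemma of_condIndep (hμ0 : ∀ ω, 0 ≤ μ ω) {C : Ω → γ} {A : Ω → α} {T : Ω → β}
    {K : α → β → ℝ}
    (hCI : ∀ c a t, distOf μ (fun ω => (C ω, A ω, T ω)) (c, a, t) * distOf μ A a
      = distOf μ (fun ω => (C ω, A ω)) (c, a) * distOf μ (fun ω => (A ω, T ω)) (a, t))
    (hK : ∀ a t, distOf μ (fun ω => (A ω, T ω)) (a, t) = distOf μ A a * K a t) :
    HasCondKernel μ C A T K := by
  intro c a t
  rcases eq_or_ne (distOf μ A a) 0 with hA | hA
  · have hCAT : distOf μ (fun ω => (C ω, A ω, T ω)) (c, a, t) = 0 :=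
      le_antisymm (hA ▸ distOf_le_distOf μ hμ0 fun ω h => (Prod.mk.inj (Prod.mk.inj h).2).1)
        (distOf_nonneg μ hμ0 _ _)
    have hCA : distOf μ (fun ω => (C ω, A ω)) (c, a) = 0 :=
      le_antisymm (hA ▸ distOf_le_distOf μ hμ0 fun ω h => (Prod.mk.inj h).2)
        (distOf_nonneg μ hμ0 _ _)
    rw [hCAT, hCA, zero_mul]
  · refine mul_right_cancel₀ hA ?_
    rw [hCI, hK]
    ring

lemma distOf_pair [Fintype γ] {C : Ω → γ} {A : Ω → α} {T : Ω → β} {K : α → β → ℝ}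
    (hK : HasCondKernel μ C A T K) (a : α) (t : β) :
    distOf μ (fun ω => (T ω, A ω)) (t, a) = distOf μ A a * K a t :=
  calc distOf μ (fun ω => (T ω, A ω)) (t, a)
      = ∑ c, distOf μ (fun ω => ((T ω, A ω), C ω)) ((t, a), c) :=
        (sum_distOf_pair_right μ _ C _).symm
    _ = ∑ c, distOf μ (fun ω => (C ω, A ω)) (c, a) * K a t :=
        Finset.sum_congr rfl fun c _ => by
          rw [← hK]
          exact distOf_congr μ fun ω => by simp only [Prod.mk.injEq]; tauto
    _ = distOf μ A a * K a t := by rw [← Finset.sum_mul, sum_distOf_pair_left]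

end HasCondKernel

section ProductKernel

variable {Ω 𝒯 𝒳 𝒴 𝒰 𝒱 : Type*} [Fintype Ω] {μ : Ω → ℝ}
  {S : Ω → 𝒯} {X : Ω → 𝒳} {Y : Ω → 𝒴} {U : Ω → 𝒰} {V : Ω → 𝒱}
  {Q₁ : 𝒳 → 𝒰 → ℝ} {Q₂ : 𝒴 → 𝒱 → ℝ}

lemma HasCondKernel.prod_comm
    (hK : HasCondKernel μ S (fun ω => (X ω, Y ω)) (fun ω => (U ω, V ω))
      fun a t => Q₁ a.1 t.1 * Q₂ a.2 t.2) :
    HasCondKernel μ S (fun ω => (Y ω, X ω)) (fun ω => (V ω, U ω))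
      fun a t => Q₂ a.1 t.1 * Q₁ a.2 t.2 := by
  rintro s ⟨y, x⟩ ⟨v, u⟩
  convert hK s (x, y) (u, v) using 1
  · exact distOf_congr μ fun ω => by simp only [Prod.mk.injEq]; tauto
  · dsimp only
    rw [mul_comm (Q₂ y v)]
    congr 1
    exact distOf_congr μ fun ω => by simp only [Prod.mk.injEq]; tauto

lemma HasCondKernel.fst_of_prod [Fintype 𝒴] [Fintype 𝒰]
    (hK : HasCondKernel μ S (fun ω => (X ω, Y ω)) (fun ω => (U ω, V ω))
      fun a t => Q₁ a.1 t.1 * Q₂ a.2 t.2)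
    (hQ₁ : ∀ x, ∑ u, Q₁ x u = 1) :
    HasCondKernel μ (fun ω => (S ω, V ω)) X U Q₁ := by
  rintro ⟨s, v⟩ x u
  have hjoint : ∀ u', distOf μ (fun ω => ((S ω, V ω), X ω, U ω)) ((s, v), x, u')
      = (∑ y, distOf μ (fun ω => (S ω, X ω, Y ω)) (s, (x, y)) * Q₂ y v) * Q₁ x u' := fun u' =>
    calc distOf μ (fun ω => ((S ω, V ω), X ω, U ω)) ((s, v), x, u')
        = ∑ y, distOf μ (fun ω => (S ω, (X ω, Y ω), (U ω, V ω))) (s, (x, y), (u', v)) := by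
          rw [← sum_distOf_pair_right μ _ Y]
          exact Finset.sum_congr rfl fun y _ =>
            distOf_congr μ fun ω => by simp only [Prod.mk.injEq]; tauto
      _ = _ := by
          rw [Finset.sum_mul]
          exact Finset.sum_congr rfl fun y _ => (hK s (x, y) (u', v)).trans (by beta_reduce; ring)
  rw [← sum_distOf_triple μ (fun ω => (S ω, V ω)) X U (s, v) x]
  simp only [hjoint, ← Finset.mul_sum, hQ₁, mul_one]

end ProductKernel

section AddNoise

variable {Ω 𝒯 α G : Type*} [Fintype Ω] [Fintype 𝒯] [Fintype α] [Fintype G] [AddGroup G]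
  {μ : Ω → ℝ} {S : Ω → 𝒯} {A : Ω → α} {T W : Ω → G} {K : α → G → ℝ}

lemma HasCondKernel.sum_mul_div_le_one (hμ0 : ∀ ω, 0 ≤ μ ω) (hμ1 : ∑ ω, μ ω = 1)
    (hK : HasCondKernel μ (fun ω => (S ω, W ω)) A T K) :
    ∑ ω, μ ω * (distOf μ (fun ω => (T ω + W ω, S ω)) (T ω + W ω, S ω) / distOf μ S (S ω)
      / K (A ω) (T ω)) ≤ 1 := by
  set pZS := distOf μ (fun ω => (T ω + W ω, S ω))
  set pS := distOf μ S
  set pSWA := distOf μ (fun ω => ((S ω, W ω), A ω))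
  calc _ = ∑ s, ∑ w, ∑ a, ∑ t, pSWA ((s, w), a) * K a t * (pZS (t + w, s) / pS s / K a t) := by
        rw [sum_mul_comp_eq_sum_distOf μ (fun ω => ((S ω, W ω), A ω, T ω))
          fun x => pZS (x.2.2 + x.1.2, x.1.1) / pS x.1.1 / K x.2.1 x.2.2]
        simp only [Fintype.sum_prod_type]
        exact Finset.sum_congr rfl fun s _ => Finset.sum_congr rfl fun w _ =>
          Finset.sum_congr rfl fun a _ => Finset.sum_congr rfl fun t _ => by rw [hK (s, w) a t]
    _ ≤ ∑ s, ∑ w, ∑ a, pSWA ((s, w), a) * ∑ t, pZS (t + w, s) / pS s := by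
        gcongr with s _ w _ a _
        rw [Finset.mul_sum]
        refine Finset.sum_le_sum fun t _ => ?_
        rw [mul_assoc]
        refine mul_le_mul_of_nonneg_left ?_ (distOf_nonneg μ hμ0 _ _)
        have hratio : 0 ≤ pZS (t + w, s) / pS s :=
          div_nonneg (distOf_nonneg μ hμ0 _ _) (distOf_nonneg μ hμ0 _ _)
        rcases eq_or_ne (K a t) 0 with hKat | hKat
        · simpa [hKat] using hratio
        · rw [mul_div_cancel₀ _ hKat]
    _ = ∑ s, ∑ w, ∑ a, pSWA ((s, w), a) * (pS s / pS s) := by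
        have hshift : ∀ s w, ∑ t, pZS (t + w, s) = pS s := fun s w =>
          (Fintype.sum_equiv (Equiv.addRight w) _ (fun z => pZS (z, s)) fun _ => rfl).trans
            (sum_distOf_pair_left μ _ S s)
        simp only [← Finset.sum_div, hshift]
    _ ≤ ∑ s, ∑ w, ∑ a, pSWA ((s, w), a) := by
        gcongr with s _ w _ a _
        exact mul_le_of_le_one_right (distOf_nonneg μ hμ0 _ _) (div_self_le_one _)
    _ = 1 := by
        rw [← sum_distOf μ hμ1 (fun ω => ((S ω, W ω), A ω))]
        simp only [Fintype.sum_prod_type, pSWA]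

lemma HasCondKernel.condEnt_le_condEnt_add (hμ0 : ∀ ω, 0 ≤ μ ω) (hμ1 : ∑ ω, μ ω = 1)
    (hK : HasCondKernel μ (fun ω => (S ω, W ω)) A T K) :
    condEnt μ T A ≤ condEnt μ (fun ω => T ω + W ω) S := by
  set ratio := fun ω => distOf μ (fun ω => (T ω + W ω, S ω)) (T ω + W ω, S ω) / distOf μ S (S ω)
  have hkernel : ∀ ω, 0 < μ ω →
      distOf μ (fun ω => (T ω, A ω)) (T ω, A ω) / distOf μ A (A ω) = K (A ω) (T ω) :=
    fun ω hω => by rw [hK.distOf_pair, mul_div_cancel_left₀ _ (distOf_pos μ hμ0 A hω).ne']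
  have hKpos : ∀ ω, 0 < μ ω → 0 < K (A ω) (T ω) := fun ω hω =>
    hkernel ω hω ▸ div_pos (distOf_pos μ hμ0 _ hω) (distOf_pos μ hμ0 A hω)
  have hratio : ∀ ω, 0 < μ ω → 0 < ratio ω := fun ω hω =>
    div_pos (distOf_pos μ hμ0 _ hω) (distOf_pos μ hμ0 S hω)
  have hgibbs := sum_mul_logb_nonpos μ hμ0 hμ1
    (fun ω hω => div_pos (hratio ω hω) (hKpos ω hω)) (hK.sum_mul_div_le_one hμ0 hμ1)
  have hsplit : ∀ ω, μ ω * Real.logb 2 (ratio ω / K (A ω) (T ω))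
      = μ ω * Real.logb 2 (ratio ω) - μ ω * Real.logb 2
          (distOf μ (fun ω => (T ω, A ω)) (T ω, A ω) / distOf μ A (A ω)) := fun ω => by
    rcases (hμ0 ω).eq_or_lt with hω | hω
    · simp [← hω]
    · rw [hkernel ω hω, Real.logb_div (hratio ω hω).ne' (hKpos ω hω).ne']
      ring
  rw [Finset.sum_congr rfl fun ω _ => hsplit ω, Finset.sum_sub_distrib] at hgibbs
  rw [condEnt_eq_neg_sum μ hμ0 T A, condEnt_eq_neg_sum μ hμ0 (fun ω => T ω + W ω) S]
  linarith

end AddNoise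

theorem stmt12_general (p r : ℕ) [NeZero (p ^ r)]
    {Ω 𝒳 𝒴 𝒯 : Type*} [Fintype Ω] [Fintype 𝒳] [Fintype 𝒴] [Fintype 𝒯]
    (μ : Ω → ℝ) (hμ0 : ∀ ω, 0 ≤ μ ω) (hμ1 : ∑ ω, μ ω = 1)
    (X : Ω → 𝒳) (Y : Ω → 𝒴) (S : Ω → 𝒯) (U V : Ω → ZMod (p ^ r))
    -- Markov chain U − X − Y − V : the joint law factors as P_{XY}·P_{U|X}·P_{V|Y}
    (hMarkov : ∃ (Q1 : 𝒳 → ZMod (p ^ r) → ℝ) (Q2 : 𝒴 → ZMod (p ^ r) → ℝ),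
      (∀ x u, 0 ≤ Q1 x u) ∧ (∀ x, ∑ u, Q1 x u = 1) ∧
      (∀ y v, 0 ≤ Q2 y v) ∧ (∀ y, ∑ v, Q2 y v = 1) ∧
      ∀ x y u v,
        distOf μ (fun ω => (X ω, Y ω, U ω, V ω)) (x, y, u, v)
          = distOf μ (fun ω => (X ω, Y ω)) (x, y) * Q1 x u * Q2 y v)
    -- S is conditionally independent of (U,V) given (X,Y)
    (hCI : ∀ s x y u v,
      distOf μ (fun ω => (S ω, X ω, Y ω, U ω, V ω)) (s, x, y, u, v)
          * distOf μ (fun ω => (X ω, Y ω)) (x, y)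
        = distOf μ (fun ω => (S ω, X ω, Y ω)) (s, x, y)
          * distOf μ (fun ω => (X ω, Y ω, U ω, V ω)) (x, y, u, v)) :
    condEnt μ U X ≤ condEnt μ (fun ω => U ω + V ω) S ∧
    condEnt μ V Y ≤ condEnt μ (fun ω => U ω + V ω) S := by
  obtain ⟨Q1, Q2, -, hQ1, -, hQ2, hM⟩ := hMarkov
  have hreassoc : ∀ x y u v, distOf μ (fun ω => ((X ω, Y ω), U ω, V ω)) ((x, y), u, v)
      = distOf μ (fun ω => (X ω, Y ω, U ω, V ω)) (x, y, u, v) := fun x y u v =>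
    distOf_congr μ fun ω => by simp only [Prod.mk.injEq, and_assoc]
  have hK : HasCondKernel μ S (fun ω => (X ω, Y ω)) (fun ω => (U ω, V ω))
      fun a t => Q1 a.1 t.1 * Q2 a.2 t.2 := by
    refine HasCondKernel.of_condIndep hμ0 ?_ fun ⟨x, y⟩ ⟨u, v⟩ => by rw [hreassoc, hM, mul_assoc]
    rintro s ⟨x, y⟩ ⟨u, v⟩
    rw [hreassoc, ← hCI]
    congr 1
    exact distOf_congr μ fun ω => by simp only [Prod.mk.injEq, and_assoc]
  refine ⟨(hK.fst_of_prod hQ1).condEnt_le_condEnt_add hμ0 hμ1, ?_⟩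
  simpa only [add_comm] using (hK.prod_comm.fst_of_prod hQ2).condEnt_le_condEnt_add hμ0 hμ1

theorem stmt12 (p r : ℕ) (hp : p.Prime) (hr : 1 ≤ r) [NeZero (p ^ r)]
    {Ω 𝒳 𝒴 𝒯 : Type*} [Fintype Ω] [Fintype 𝒳] [Fintype 𝒴] [Fintype 𝒯]
    (μ : Ω → ℝ) (hμ0 : ∀ ω, 0 ≤ μ ω) (hμ1 : ∑ ω, μ ω = 1)
    (X : Ω → 𝒳) (Y : Ω → 𝒴) (S : Ω → 𝒯) (U V : Ω → ZMod (p ^ r))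
    -- Markov chain U − X − Y − V : the joint law factors as P_{XY}·P_{U|X}·P_{V|Y}
    (hMarkov : ∃ (Q1 : 𝒳 → ZMod (p ^ r) → ℝ) (Q2 : 𝒴 → ZMod (p ^ r) → ℝ),
      (∀ x u, 0 ≤ Q1 x u) ∧ (∀ x, ∑ u, Q1 x u = 1) ∧
      (∀ y v, 0 ≤ Q2 y v) ∧ (∀ y, ∑ v, Q2 y v = 1) ∧
      ∀ x y u v,
        distOf μ (fun ω => (X ω, Y ω, U ω, V ω)) (x, y, u, v)
          = distOf μ (fun ω => (X ω, Y ω)) (x, y) * Q1 x u * Q2 y v)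
    -- S is conditionally independent of (U,V) given (X,Y)
    (hCI : ∀ s x y u v,
      distOf μ (fun ω => (S ω, X ω, Y ω, U ω, V ω)) (s, x, y, u, v)
          * distOf μ (fun ω => (X ω, Y ω)) (x, y)
        = distOf μ (fun ω => (S ω, X ω, Y ω)) (s, x, y)
          * distOf μ (fun ω => (X ω, Y ω, U ω, V ω)) (x, y, u, v)) :
    condEnt μ U X ≤ condEnt μ (fun ω => U ω + V ω) S ∧
    condEnt μ V Y ≤ condEnt μ (fun ω => U ω + V ω) S :=
  stmt12_general p r μ hμ0 hμ1 X Y S U V hMarkov hCI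

end
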